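/- Let $X \subset Y$ be Banach spaces, $1 < p \leq \infty$, $X$ reflexive, and $I$ an interval. If $(f_n)$ is a bounded sequence in $L^p(I, X)$, $f: I \to Y$ satisfies $f_n(t) \rightharpoonup f(t)$ weakly in $Y$ for almost every $t \in I$, and $(f_n)$ is bounded in $L^q(I,Y)$ for some $1 < q \leq \infty$, then $f \in L^p(I, X)$ and $\|f\|_{L^p(I,X)} \leq \liminf_{n \to \infty} \|f_n\|_{L^p(I,X)}$. -/

import Mathlib

/-!
Fix `t` with `fₙ(t) ⇀ f(t)` and `Λ(t) = liminf ‖fₙ(t)‖ < ∞` (a.e. by Fatou). Along an ultrafilter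
realising `Λ(t)`, reflexivity of `X` turns the bounded sequence `fₙ(t)` into a weak limit
`g(t) ∈ X` with `‖g(t)‖ ≤ Λ(t)`, and `ι (g t) = f t` by uniqueness of weak limits in `Y`.
Since `g` lives in the closed separable span of the ranges of the `fₙ`, countably many functionals
`ψ ∘ ι` separate its values, and each `ψ (ι (g t))` is a pointwise limit of measurable functions;
so `g` is strongly measurable. Fatou's lemma for `‖g‖ ≤ Λ` gives the `Lᵖ` bound.
-/

open MeasureTheory Filter
open scoped Topology ENNReal

theorem exists_tendsto_dual_of_tendsto_norm {X β : Type*} [NormedAddCommGroup X]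
    [NormedSpace ℝ X] (hrefl : Function.Surjective (NormedSpace.inclusionInDoubleDual ℝ X))
    (U : Ultrafilter β) {x : β → X} {M : ℝ} (hM : Tendsto (fun k => ‖x k‖) U (𝓝 M)) :
    ∃ z : X, ‖z‖ ≤ M ∧ ∀ φ : StrongDual ℝ X, Tendsto (fun k => φ (x k)) U (𝓝 (φ z)) := by
  have hlim : ∀ φ : StrongDual ℝ X, ∃ a, Tendsto (fun k => φ (x k)) U (𝓝 a) := by
    intro φ
    have hbdd : ∀ᶠ k in U, φ (x k) ∈ Metric.closedBall 0 (‖φ‖ * (M + 1)) := by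
      filter_upwards [hM.eventually_le_const (lt_add_one M)] with k hk
      rw [mem_closedBall_zero_iff]
      exact (φ.le_opNorm _).trans (by gcongr)
    obtain ⟨a, -, ha⟩ := (isCompact_closedBall (0 : ℝ) _).ultrafilter_le_nhds
      (U.map fun k => φ (x k)) (le_principal_iff.2 hbdd)
    exact ⟨a, ha⟩
  choose ψ hψ using hlim
  have hψ_bound : ∀ φ, ‖ψ φ‖ ≤ M * ‖φ‖ := fun φ =>
    le_of_tendsto_of_tendsto' (hψ φ).norm ((hM.const_mul ‖φ‖).trans_eq (by rw [mul_comm]))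
      fun k => φ.le_opNorm _
  let Ψ : StrongDual ℝ (StrongDual ℝ X) := LinearMap.mkContinuous
    { toFun := ψ
      map_add' := fun φ χ =>
        tendsto_nhds_unique (hψ (φ + χ)) (by simpa using (hψ φ).add (hψ χ))
      map_smul' := fun c φ =>
        tendsto_nhds_unique (hψ (c • φ)) (by simpa using (hψ φ).const_mul c) }
    M hψ_bound
  obtain ⟨z, hz⟩ := hrefl Ψ
  have hz_eval : ∀ φ, φ z = ψ φ := fun φ => congr($hz φ)
  refine ⟨z, NormedSpace.norm_le_dual_bound ℝ z ?_ fun φ => ?_, fun φ => ?_⟩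
  · exact ge_of_tendsto' hM fun k => norm_nonneg _
  · rw [hz_eval]; exact hψ_bound φ
  · rw [hz_eval]; exact hψ φ

theorem exists_mem_map_eq_enorm_le_liminf {X Y : Type*} [NormedAddCommGroup X]
    [NormedSpace ℝ X] [NormedAddCommGroup Y] [NormedSpace ℝ Y]
    (hrefl : Function.Surjective (NormedSpace.inclusionInDoubleDual ℝ X))
    (ι : X →L[ℝ] Y) {K : Set X} (hKc : IsClosed K) (hKconv : Convex ℝ K)
    {x : ℕ → X} (hxK : ∀ n, x n ∈ K) {y : Y}
    (hy : ∀ φ : StrongDual ℝ Y, Tendsto (fun n => φ (ι (x n))) atTop (𝓝 (φ y)))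
    (hfin : liminf (fun n => ‖x n‖ₑ) atTop ≠ ∞) :
    ∃ z ∈ K, ι z = y ∧ ‖z‖ₑ ≤ liminf (fun n => ‖x n‖ₑ) atTop := by
  set L := liminf (fun n => ‖x n‖ₑ) atTop
  obtain ⟨U, hU, hUL⟩ := mapClusterPt_iff_ultrafilter.1
    (MapClusterPt.liminf (u := fun n => ‖x n‖ₑ) (f := atTop))
  have hM : Tendsto (fun n => ‖x n‖) U (𝓝 L.toReal) := by
    simpa [Function.comp_def] using (ENNReal.tendsto_toReal hfin).comp hUL
  obtain ⟨z, hzL, hz⟩ := exists_tendsto_dual_of_tendsto_norm hrefl U hM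
  refine ⟨z, ?_, ?_, ?_⟩
  · by_contra hzK
    obtain ⟨φ, u, hφK, huz⟩ := geometric_hahn_banach_closed_point hKconv hKc hzK
    exact (le_of_tendsto (hz φ) (Eventually.of_forall fun n => (hφK _ (hxK n)).le)).not_gt huz
  · refine SeparatingDual.eq_iff_forall_dual_eq.2 fun χ =>
      tendsto_nhds_unique (hz (χ.comp ι)) ((hy χ).mono_left hU)
  · rw [← ofReal_norm, ← ENNReal.ofReal_toReal hfin]
    exact ENNReal.ofReal_le_ofReal hzL

theorem TopologicalSpace.IsSeparable.exists_dual_seq_injOn {E : Type*} [NormedAddCommGroup E]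
    [NormedSpace ℝ E] {W : Set E} (hW : IsSeparable W) :
    ∃ φ : ℕ → StrongDual ℝ E, Set.InjOn (fun x k => φ k x) W := by
  obtain ⟨c, hc, hWc⟩ := (hW.prod hW).image (continuous_fst.sub continuous_snd)
  obtain ⟨d, hcd⟩ := Set.countable_iff_exists_subset_range.1 hc
  choose φ hφ_norm hφ_eval using fun k => exists_dual_vector'' ℝ (d k)
  refine ⟨φ, fun x hx y hy hxy => ?_⟩
  have hv : x - y ∈ closure (Set.range d) :=
    closure_mono hcd (hWc ⟨(x, y), ⟨hx, hy⟩, rfl⟩)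
  have hφv : ∀ k, φ k (x - y) = 0 := fun k => by
    rw [map_sub, sub_eq_zero]; exact congrFun hxy k
  rw [← sub_eq_zero, ← norm_le_zero_iff]
  refine le_of_forall_pos_le_add fun ε hε => ?_
  obtain ⟨k, hk⟩ := Metric.mem_closure_range_iff.1 hv (ε / 2) (half_pos hε)
  rw [dist_eq_norm] at hk
  have hdk : ‖d k‖ ≤ ‖x - y - d k‖ := by
    calc ‖d k‖ = φ k (d k - (x - y)) := by simp [hφv, hφ_eval]
      _ ≤ ‖φ k‖ * ‖d k - (x - y)‖ := (Real.le_norm_self _).trans ((φ k).le_opNorm _)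
      _ ≤ ‖x - y - d k‖ := by
        rw [norm_sub_rev]; exact mul_le_of_le_one_left (norm_nonneg _) (hφ_norm k)
  linarith [norm_le_norm_add_norm_sub' (x - y) (d k)]

theorem stronglyMeasurable_of_measurable_dual_comp {α X Y : Type*} [MeasurableSpace α]
    [NormedAddCommGroup X] [NormedSpace ℝ X] [CompleteSpace X]
    [NormedAddCommGroup Y] [NormedSpace ℝ Y] (T : X →L[ℝ] Y) (hT : Function.Injective T)
    {K : Set X} (hKc : IsClosed K) (hKs : TopologicalSpace.IsSeparable K) {g : α → X}
    (hgK : ∀ t, g t ∈ K) (hg : ∀ ψ : StrongDual ℝ Y, Measurable fun t => ψ (T (g t))) :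
    StronglyMeasurable g := by
  obtain ⟨ψ, hψ⟩ := (hKs.image T.continuous).exists_dual_seq_injOn
  have := hKs.separableSpace
  have := hKc.completeSpace_coe
  let : MeasurableSpace K := borel K
  have : BorelSpace K := ⟨rfl⟩
  have hF : MeasurableEmbedding fun (x : K) k => ψ k (T x) :=
    Continuous.measurableEmbedding (by fun_prop) fun x y hxy =>
      Subtype.ext (hT (hψ (Set.mem_image_of_mem _ x.2) (Set.mem_image_of_mem _ y.2) hxy))
  have hG : Measurable fun t => (⟨g t, hgK t⟩ : K) :=
    hF.measurable_comp_iff.1 (measurable_pi_lambda _ fun k => hg (ψ k))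
  exact continuous_subtype_val.comp_stronglyMeasurable hG.stronglyMeasurable

theorem exists_stronglyMeasurable_weak_limit {α X Y : Type*} [MeasurableSpace α]
    {μ : Measure α} [NormedAddCommGroup X] [NormedSpace ℝ X] [CompleteSpace X]
    [NormedAddCommGroup Y] [NormedSpace ℝ Y]
    (hrefl : Function.Surjective (NormedSpace.inclusionInDoubleDual ℝ X))
    (ι : X →L[ℝ] Y) (hι : Function.Injective ι)
    {h : ℕ → α → X} (hh : ∀ n, StronglyMeasurable (h n)) {f : α → Y}
    (hweak : ∀ᵐ t ∂μ, ∀ φ : StrongDual ℝ Y,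
      Tendsto (fun n => φ (ι (h n t))) atTop (𝓝 (φ (f t))))
    (hfin : ∀ᵐ t ∂μ, liminf (fun n => ‖h n t‖ₑ) atTop ≠ ∞) :
    ∃ g : α → X, StronglyMeasurable g ∧ (∀ᵐ t ∂μ, ι (g t) = f t) ∧
      ∀ᵐ t ∂μ, ‖g t‖ₑ ≤ liminf (fun n => ‖h n t‖ₑ) atTop := by
  classical
  set V := Submodule.span ℝ (⋃ n, Set.range (h n))
  set K := V.topologicalClosure
  have hmemK : ∀ n t, h n t ∈ K := fun n t =>
    V.le_topologicalClosure (Submodule.subset_span (Set.mem_iUnion.2 ⟨n, t, rfl⟩))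
  have hKsep : TopologicalSpace.IsSeparable (K : Set X) := by
    rw [Submodule.topologicalClosure_coe]
    exact (TopologicalSpace.IsSeparable.iUnion fun n => (hh n).isSeparable_range).span.closure
  obtain ⟨S, hSae, hSmeas, hS⟩ := (hweak.and hfin).exists_measurable_mem
  choose! z hzK hzι hz_le using fun t (ht : t ∈ S) =>
    exists_mem_map_eq_enorm_le_liminf hrefl ι V.isClosed_topologicalClosure K.convex
      (fun n => hmemK n t) (hS t ht).1 (hS t ht).2
  let g := S.piecewise z 0
  refine ⟨g, ?_, ?_, ?_⟩
  · refine stronglyMeasurable_of_measurable_dual_comp ι hι V.isClosed_topologicalClosure hKsep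
      (fun t => ?_) fun ψ => ?_
    · by_cases ht : t ∈ S
      · simpa [g, ht] using hzK t ht
      · simp only [g, Set.piecewise_eq_of_notMem _ _ _ ht, Pi.zero_apply]
        exact K.zero_mem
    refine measurable_of_tendsto_metrizable
      (fun n => (ψ.continuous.comp ι.continuous).comp_stronglyMeasurable (hh n)
        |>.measurable.indicator hSmeas)
      (tendsto_pi_nhds.2 fun t => ?_)
    by_cases ht : t ∈ S
    · simpa [g, ht, hzι] using (hS t ht).1 ψ
    · simp [g, ht]
  · filter_upwards [hSae] with t ht
    simp [g, ht, hzι]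
  · filter_upwards [hSae] with t ht
    simpa [g, ht] using hz_le t ht

theorem eLpNorm_le_liminf_eLpNorm_of_ae_enorm_le_liminf {α E F : Type*} [MeasurableSpace α]
    {μ : Measure α} [NormedAddCommGroup E] [NormedAddCommGroup F] {p : ℝ≥0∞}
    {f : ℕ → α → E} (hf : ∀ n, AEStronglyMeasurable (f n) μ) {g : α → F}
    (hg : ∀ᵐ t ∂μ, ‖g t‖ₑ ≤ liminf (fun n => ‖f n t‖ₑ) atTop) :
    eLpNorm g p μ ≤ liminf (fun n => eLpNorm (f n) p μ) atTop := by
  rcases eq_or_ne p 0 with rfl | hp0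
  · simp
  rcases eq_or_ne p ∞ with rfl | hptop
  · simp only [eLpNorm_exponent_top, eLpNormEssSup]
    exact (essSup_mono_ae hg).trans (ENNReal.essSup_liminf_le _)
  have hr : 0 < p.toReal := ENNReal.toReal_pos hp0 hptop
  have hpow_liminf : ∀ (r : ℝ) (u : ℕ → ℝ≥0∞), 0 ≤ r →
      liminf u atTop ^ r = liminf (fun n => u n ^ r) atTop := fun r u hr₀ =>
    (ENNReal.monotone_rpow_of_nonneg hr₀).map_liminf_of_continuousAt u
      (ENNReal.continuous_rpow_const.continuousAt)
  simp only [eLpNorm_eq_eLpNorm' hp0 hptop, eLpNorm'_eq_lintegral_enorm]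
  calc (∫⁻ t, ‖g t‖ₑ ^ p.toReal ∂μ) ^ (1 / p.toReal)
      ≤ (∫⁻ t, liminf (fun n => ‖f n t‖ₑ ^ p.toReal) atTop ∂μ) ^ (1 / p.toReal) := by
        gcongr ?_ ^ _
        refine lintegral_mono_ae (hg.mono fun t ht => ?_)
        rw [← hpow_liminf _ _ hr.le]
        gcongr
    _ ≤ (liminf (fun n => ∫⁻ t, ‖f n t‖ₑ ^ p.toReal ∂μ) atTop) ^ (1 / p.toReal) := by
        gcongr ?_ ^ _
        exact lintegral_liminf_le' fun n => (hf n).enorm.pow_const _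
    _ = liminf (fun n => (∫⁻ t, ‖f n t‖ₑ ^ p.toReal ∂μ) ^ (1 / p.toReal)) atTop :=
        hpow_liminf _ _ (by positivity)

theorem stmt_14_general {X Y : Type*} [NormedAddCommGroup X] [NormedSpace ℝ X] [CompleteSpace X]
    [NormedAddCommGroup Y] [NormedSpace ℝ Y]
    (hrefl : Function.Surjective (NormedSpace.inclusionInDoubleDual ℝ X))
    (ι : X →L[ℝ] Y) (hι : Function.Injective ι)
    (I : Set ℝ)
    (p : ℝ≥0∞) (hp : 1 < p)
    (fn : ℕ → ℝ → X) (f : ℝ → Y)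
    (hmeas : ∀ n, AEStronglyMeasurable (fn n) (volume.restrict I))
    (hbddX : ∃ C : ℝ≥0∞, C < ⊤ ∧ ∀ n, eLpNorm (fn n) p (volume.restrict I) ≤ C)
    (hweak : ∀ᵐ t ∂(volume.restrict I), ∀ φ : Y →L[ℝ] ℝ,
      Tendsto (fun n => φ (ι (fn n t))) atTop (𝓝 (φ (f t)))) :
    ∃ g : ℝ → X,
      (∀ᵐ t ∂(volume.restrict I), ι (g t) = f t) ∧
        MemLp g p (volume.restrict I) ∧
        eLpNorm g p (volume.restrict I) ≤
          liminf (fun n => eLpNorm (fn n) p (volume.restrict I)) atTop := by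
  set μ := volume.restrict I
  obtain ⟨C, hC, hCb⟩ := hbddX
  borelize X
  set h := fun n => (hmeas n).mk (fn n)
  have hh : ∀ n, StronglyMeasurable (h n) := fun n => (hmeas n).stronglyMeasurable_mk
  have hfn_eq : ∀ n, fn n =ᵐ[μ] h n := fun n => (hmeas n).ae_eq_mk
  have hnorm_eq : ∀ n, eLpNorm (h n) p μ = eLpNorm (fn n) p μ := fun n =>
    eLpNorm_congr_ae (hfn_eq n).symm
  have hfin : ∀ᵐ t ∂μ, liminf (fun n => ‖h n t‖ₑ) atTop ≠ ∞ :=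
    (ae_bdd_liminf_atTop_of_eLpNorm_bdd (R := C.toNNReal) (zero_lt_one.trans hp).ne'
      (fun n => (hh n).measurable) fun n => by
        rw [hnorm_eq, ENNReal.coe_toNNReal hC.ne]; exact hCb n).mono fun _ => LT.lt.ne
  have hweak_h : ∀ᵐ t ∂μ, ∀ φ : StrongDual ℝ Y,
      Tendsto (fun n => φ (ι (h n t))) atTop (𝓝 (φ (f t))) := by
    filter_upwards [hweak, ae_all_iff.2 hfn_eq] with t ht heq
    simpa only [heq] using ht
  obtain ⟨g, hg, hgf, hg_le⟩ := exists_stronglyMeasurable_weak_limit hrefl ι hι hh hweak_h hfin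
  have hbound : eLpNorm g p μ ≤ liminf (fun n => eLpNorm (fn n) p μ) atTop :=
    (eLpNorm_le_liminf_eLpNorm_of_ae_enorm_le_liminf (fun n => (hh n).aestronglyMeasurable)
      hg_le).trans_eq (congrArg (liminf · atTop) (funext hnorm_eq))
  have hliminf_lt : liminf (fun n => eLpNorm (fn n) p μ) atTop < ∞ :=
    (liminf_le_of_frequently_le' (Frequently.of_forall hCb)).trans_lt hC
  exact ⟨g, hgf, ⟨hg.aestronglyMeasurable, hbound.trans_lt hliminf_lt⟩, hbound⟩

/-- Weak lower semicontinuity in Bochner spaces: let `ι : X ↪ Y` be a continuous linear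
embedding of Banach spaces with `X` reflexive, `1 < p ≤ ∞`, `I` an interval. If `(fₙ)`
is bounded in `L^p(I,X)` and in `L^q(I,Y)` for some `1 < q ≤ ∞`, and `fₙ(t) ⇀ f(t)`
weakly in `Y` for a.e. `t ∈ I`, then `f ∈ L^p(I,X)` (i.e. `f = ι ∘ g` a.e. for some
`g ∈ L^p(I,X)`) with `‖g‖_{L^p(I,X)} ≤ liminf ‖fₙ‖_{L^p(I,X)}`. -/
theorem stmt_14 {X Y : Type*} [NormedAddCommGroup X] [NormedSpace ℝ X] [CompleteSpace X]
    [NormedAddCommGroup Y] [NormedSpace ℝ Y] [CompleteSpace Y]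
    (hrefl : Function.Surjective (NormedSpace.inclusionInDoubleDual ℝ X))
    (ι : X →L[ℝ] Y) (hι : Function.Injective ι)
    (I : Set ℝ) (hI : MeasurableSet I)
    (p q : ℝ≥0∞) (hp : 1 < p) (hq : 1 < q)
    (fn : ℕ → ℝ → X) (f : ℝ → Y)
    (hmeas : ∀ n, AEStronglyMeasurable (fn n) (volume.restrict I))
    (hbddX : ∃ C : ℝ≥0∞, C < ⊤ ∧ ∀ n, eLpNorm (fn n) p (volume.restrict I) ≤ C)
    (hbddY : ∃ C : ℝ≥0∞, C < ⊤ ∧ ∀ n,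
      eLpNorm (fun t => ι (fn n t)) q (volume.restrict I) ≤ C)
    (hweak : ∀ᵐ t ∂(volume.restrict I), ∀ φ : Y →L[ℝ] ℝ,
      Tendsto (fun n => φ (ι (fn n t))) atTop (𝓝 (φ (f t)))) :
    ∃ g : ℝ → X,
      (∀ᵐ t ∂(volume.restrict I), ι (g t) = f t) ∧
        MemLp g p (volume.restrict I) ∧
        eLpNorm g p (volume.restrict I) ≤
          liminf (fun n => eLpNorm (fn n) p (volume.restrict I)) atTop :=
  stmt_14_general hrefl ι hι I p hp fn f hmeas hbddX hweak
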